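/- For all positive integers n, r, l: if a connected ordered graph G is n-good, then the ordered graphs G + S_{1,r}, G + S_{l,1}, S_{l,1} + G, and S_{1,r} + G are all n-good. -/

import Mathlib

/-- `G` (an ordered graph on `[m]`, modeled on `Fin m`) is an ordered subgraph of `H`
(on `Fin N`): there is a strictly increasing map preserving edges. -/
def OrderedSubgraph {m N : ℕ} (G : SimpleGraph (Fin m)) (H : SimpleGraph (Fin N)) : Prop :=
  ∃ φ : Fin m → Fin N, StrictMono φ ∧ ∀ i j : Fin m, G.Adj i j → H.Adj (φ i) (φ j)

/-- The ordered Ramsey number `r_<(G, H)`: the least `N` such that every red-blue coloring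
of the edges of the complete ordered graph on `N` vertices (given by its red graph `R`)
contains a red ordered copy of `G` or a blue ordered copy of `H`. -/
noncomputable def orderedRamsey {m k : ℕ} (G : SimpleGraph (Fin m)) (H : SimpleGraph (Fin k)) : ℕ :=
  sInf {N : ℕ | ∀ R : SimpleGraph (Fin N), OrderedSubgraph G R ∨ OrderedSubgraph H Rᶜ}

/-- The nested matching `NM_n`: the ordered graph on `2n` vertices with edges
`{i, 2n - i + 1}` (1-indexed), i.e. `i + j = 2n - 1` in 0-indexed form. -/
def nestedMatching (n : ℕ) : SimpleGraph (Fin (2 * n)) :=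
  SimpleGraph.fromRel (fun i j => (i : ℕ) + (j : ℕ) = 2 * n - 1)

/-- The ordered star `S_{l,r}` on `l + r - 1` vertices: the `l`-th vertex (1-indexed)
is adjacent to all other vertices. -/
def orderedStar (l r : ℕ) : SimpleGraph (Fin (l + r - 1)) :=
  SimpleGraph.fromRel (fun i _ => (i : ℕ) = l - 1)

/-- The join `G + H` of ordered graphs, identifying the rightmost vertex of `G`
with the leftmost vertex of `H`. -/
def orderedJoin {m k : ℕ} (G : SimpleGraph (Fin m)) (H : SimpleGraph (Fin k)) :
    SimpleGraph (Fin (m + k - 1)) :=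
  SimpleGraph.fromRel (fun i j =>
    (∃ a b : Fin m, G.Adj a b ∧ (i : ℕ) = (a : ℕ) ∧ (j : ℕ) = (b : ℕ)) ∨
    (∃ a b : Fin k, H.Adj a b ∧ (i : ℕ) = (a : ℕ) + (m - 1) ∧ (j : ℕ) = (b : ℕ) + (m - 1)))

/-- A connected ordered graph on `m` vertices is `n`-good if
`r_<(G, K_n) = (m-1)(n-1) + 1`. -/
def IsNGood {m : ℕ} (n : ℕ) (G : SimpleGraph (Fin m)) : Prop :=
  G.Connected ∧ orderedRamsey G (⊤ : SimpleGraph (Fin n)) = (m - 1) * (n - 1) + 1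

/-- Monotone caterpillar graphs: joins `S_{l₁,r₁} + ⋯ + S_{l_k,r_k}` of one-sided
ordered stars. -/
inductive IsMonotoneCaterpillar : ∀ {m : ℕ}, SimpleGraph (Fin m) → Prop
  | star {l r : ℕ} (hl : 1 ≤ l) (hr : 1 ≤ r) (h : l = 1 ∨ r = 1) :
      IsMonotoneCaterpillar (orderedStar l r)
  | join {m l r : ℕ} {G : SimpleGraph (Fin m)} (hl : 1 ≤ l) (hr : 1 ≤ r) (h : l = 1 ∨ r = 1)
      (hG : IsMonotoneCaterpillar G) : IsMonotoneCaterpillar (orderedJoin G (orderedStar l r))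

/-- A route in the `N × N` grid: a sequence of positions going only right or down. -/
def IsRoute {N : ℕ} (s : List (Fin N × Fin N)) : Prop :=
  s.Chain' (fun p q =>
    ((q.1 : ℕ) = (p.1 : ℕ) + 1 ∧ q.2 = p.2) ∨ (q.1 = p.1 ∧ (q.2 : ℕ) = (p.2 : ℕ) + 1))

/-!
Lower bound, for any connected `G` on `m` vertices: colour red exactly the edges inside the
`n - 1` consecutive blocks of `m - 1` vertices. A red copy of `G` is connected, so it would fit
into one block, and a blue `K_n` would need `n` distinct blocks.

Upper bound for `X + G`, where `X` is a star on `l` vertices centred at its last vertex. Call a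
vertex bad if it is not the centre of a red copy of `X`. A bad vertex has fewer than `l - 1`
red neighbours to its left, so greedily from the right `(l - 1)(n - 1) + 1` bad vertices
contain a blue `K_n`. Otherwise `(m - 1)(n - 1) + 1` vertices are good, and since `G` is
`n`-good they contain a red copy of `G` or a blue `K_n`; the first vertex of that copy of `G`
is the centre of a red `X`, and the two copies glue. For `G + X` call a vertex bad if it is not
the first vertex of a red copy of `X`: if a bad `v` had `l - 1` red left neighbours among the bad
vertices, they would form together with `v` a red copy of `X` with a bad first vertex.

Reversing the vertex order turns `G + S_{1,r}` and `S_{1,r} + G` into joins of the reversal of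
`G`, which is again `n`-good, with the star `S_{r,1}`.
-/

open Finset

def OrderedArrows {m k : ℕ} (N : ℕ) (G : SimpleGraph (Fin m)) (H : SimpleGraph (Fin k)) : Prop :=
  ∀ R : SimpleGraph (Fin N), OrderedSubgraph G R ∨ OrderedSubgraph H Rᶜ

section OrderedSubgraph

variable {m k N N' : ℕ} {G : SimpleGraph (Fin m)} {H : SimpleGraph (Fin k)}

theorem OrderedSubgraph.of_comap {R : SimpleGraph (Fin N')} {f : Fin N → Fin N'}
    (hf : StrictMono f) (h : OrderedSubgraph G (R.comap f)) : OrderedSubgraph G R := by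
  obtain ⟨φ, hφ, hφR⟩ := h
  exact ⟨f ∘ φ, hf.comp hφ, hφR⟩

theorem OrderedSubgraph.compl_of_compl_comap {R : SimpleGraph (Fin N')} {f : Fin N → Fin N'}
    (hf : StrictMono f) (h : OrderedSubgraph G (R.comap f)ᶜ) : OrderedSubgraph G Rᶜ := by
  obtain ⟨φ, hφ, hφR⟩ := h
  refine ⟨f ∘ φ, hf.comp hφ, fun i j hij => ?_⟩
  obtain ⟨hne, hnadj⟩ := (SimpleGraph.compl_adj _ _ _).1 (hφR i j hij)
  exact (SimpleGraph.compl_adj _ _ _).2 ⟨hf.injective.ne hne, hnadj⟩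

theorem OrderedSubgraph.comap_rev {R : SimpleGraph (Fin N)} (h : OrderedSubgraph G R) :
    OrderedSubgraph (G.comap Fin.rev) (R.comap Fin.rev) := by
  obtain ⟨φ, hφ, hφR⟩ := h
  refine ⟨Fin.rev ∘ φ ∘ Fin.rev, (Fin.rev_strictAnti.comp_strictMono hφ).comp Fin.rev_strictAnti,
    fun i j hij => ?_⟩
  simpa using hφR _ _ hij

theorem OrderedSubgraph.trans {m₁ m₂ m₃ : ℕ} {G₁ : SimpleGraph (Fin m₁)}
    {G₂ : SimpleGraph (Fin m₂)} {G₃ : SimpleGraph (Fin m₃)}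
    (h₁₂ : OrderedSubgraph G₁ G₂) (h₂₃ : OrderedSubgraph G₂ G₃) : OrderedSubgraph G₁ G₃ := by
  obtain ⟨φ, hφ, hφG⟩ := h₁₂
  obtain ⟨ψ, hψ, hψG⟩ := h₂₃
  exact ⟨ψ ∘ φ, hψ.comp hφ, fun i j hij => hψG _ _ (hφG i j hij)⟩

theorem orderedSubgraph_top_of_isNClique {R : SimpleGraph (Fin N)} {T : Finset (Fin N)}
    (hT : R.IsNClique k T) : OrderedSubgraph (⊤ : SimpleGraph (Fin k)) R :=
  ⟨T.orderEmbOfFin hT.2, (T.orderEmbOfFin hT.2).strictMono, fun i j hij =>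
    hT.1 (T.orderEmbOfFin_mem hT.2 i) (T.orderEmbOfFin_mem hT.2 j)
      ((T.orderEmbOfFin hT.2).injective.ne hij.ne)⟩

end OrderedSubgraph

section OrderedArrows

variable {m k N N' : ℕ} {G : SimpleGraph (Fin m)} {H : SimpleGraph (Fin k)}

theorem OrderedArrows.comap_strictMono (h : OrderedArrows N G H) {f : Fin N → Fin N'}
    (hf : StrictMono f) (R : SimpleGraph (Fin N')) :
    OrderedSubgraph G (R.comap f) ∨ OrderedSubgraph H Rᶜ :=
  (h (R.comap f)).imp id (OrderedSubgraph.compl_of_compl_comap hf)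

theorem OrderedArrows.mono (h : OrderedArrows N G H) (hN : N ≤ N') : OrderedArrows N' G H :=
  fun R => (h.comap_strictMono (Fin.strictMono_castLE hN) R).imp_left
    (OrderedSubgraph.of_comap (Fin.strictMono_castLE hN))

theorem OrderedArrows.exists_within (h : OrderedArrows N G H) (R : SimpleGraph (Fin N'))
    (S : Finset (Fin N')) (hS : N ≤ #S) :
    (∃ ψ : Fin m → Fin N', StrictMono ψ ∧ (∀ i, ψ i ∈ S) ∧
      ∀ i j, G.Adj i j → R.Adj (ψ i) (ψ j)) ∨ OrderedSubgraph H Rᶜ := by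
  let f := S.orderEmbOfFin rfl
  refine ((h.mono hS).comap_strictMono f.strictMono R).imp_left ?_
  rintro ⟨φ, hφ, hφR⟩
  exact ⟨f ∘ φ, f.strictMono.comp hφ, fun i => S.orderEmbOfFin_mem rfl (φ i), hφR⟩

theorem OrderedArrows.comap_rev (h : OrderedArrows N G (⊤ : SimpleGraph (Fin k))) :
    OrderedArrows N (G.comap Fin.rev) (⊤ : SimpleGraph (Fin k)) := by
  intro R
  rcases h (R.comap Fin.rev) with hred | hblue
  · left
    simpa [SimpleGraph.comap_comap, Fin.rev_involutive.comp_self] using hred.comap_rev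
  · right
    have hcompl : (R.comap Fin.rev)ᶜ.comap Fin.rev = Rᶜ := by
      ext i j
      simp
    simpa [hcompl, SimpleGraph.comap_top Fin.rev_injective] using hblue.comap_rev

end OrderedArrows

section IsNGood

variable {m n : ℕ} {G : SimpleGraph (Fin m)}

theorem not_orderedArrows_of_connected (hG : G.Connected) (hn : 1 ≤ n) :
    ¬ OrderedArrows ((m - 1) * (n - 1)) G (⊤ : SimpleGraph (Fin n)) := by
  set q := m - 1
  intro h
  rcases h (SimpleGraph.fromRel fun x y => (x : ℕ) / q = y / q) with
    ⟨φ, hφ, hφR⟩ | ⟨φ, hφ, hφB⟩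
  · have hm : 0 < m := hG.nonempty.elim fun v => v.pos
    have hq : 0 < q := Nat.pos_of_ne_zero fun h0 => by simpa [h0] using (φ ⟨0, hm⟩).pos
    have hblock : ∀ u v, G.Reachable u v → (φ u : ℕ) / q = φ v / q := by
      rintro u v ⟨w⟩
      induction w with
      | nil => rfl
      | cons hadj _ ih =>
        exact (((SimpleGraph.fromRel_adj _ _ _).1 (hφR _ _ hadj)).2.elim id Eq.symm).trans ih
    obtain ⟨a, b, hab, hmod⟩ := Fintype.exists_ne_map_eq_of_card_lt
      (fun a => (⟨(φ a : ℕ) % q, Nat.mod_lt _ hq⟩ : Fin q)) (by simp [q]; omega)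
    have hdiv := hblock a b (hG.preconnected a b)
    have hmod' : (φ a : ℕ) % q = φ b % q := congrArg Fin.val hmod
    refine hab (hφ.injective (Fin.ext ?_))
    rw [← Nat.div_add_mod (φ a) q, ← Nat.div_add_mod (φ b) q, hdiv, hmod']
  · obtain ⟨i, j, hij, hdiv⟩ := Fintype.exists_ne_map_eq_of_card_lt
      (fun i => (⟨(φ i : ℕ) / q, Nat.div_lt_of_lt_mul (φ i).isLt⟩ : Fin (n - 1)))
      (by simp; omega)
    have hblue := (SimpleGraph.compl_adj _ _ _).1 (hφB i j ((SimpleGraph.top_adj i j).2 hij))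
    exact hblue.2 ((SimpleGraph.fromRel_adj _ _ _).2 ⟨hblue.1, Or.inl (congrArg Fin.val hdiv)⟩)

theorem isNGood_iff_orderedArrows (hG : G.Connected) (hn : 1 ≤ n) :
    IsNGood n G ↔ OrderedArrows ((m - 1) * (n - 1) + 1) G (⊤ : SimpleGraph (Fin n)) := by
  have hup : ∀ N₁ N₂, N₁ ≤ N₂ → N₁ ∈ {N | OrderedArrows N G (⊤ : SimpleGraph (Fin n))} →
      N₂ ∈ {N | OrderedArrows N G (⊤ : SimpleGraph (Fin n))} :=
    fun _ _ hle h => OrderedArrows.mono h hle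
  change G.Connected ∧ sInf {N | OrderedArrows N G ⊤} = _ ↔ _
  simpa [hG, not_orderedArrows_of_connected hG hn] using
    Nat.sInf_upward_closed_eq_succ_iff hup ((m - 1) * (n - 1))

end IsNGood

section OrderedJoin

variable {a b N : ℕ} {A : SimpleGraph (Fin a)} {B : SimpleGraph (Fin b)}

theorem orderedJoin_adj {i j : Fin (a + b - 1)} :
    (orderedJoin A B).Adj i j ↔
      (∃ x y : Fin a, A.Adj x y ∧ (i : ℕ) = x ∧ (j : ℕ) = y) ∨
      (∃ x y : Fin b, B.Adj x y ∧ (i : ℕ) = x + (a - 1) ∧ (j : ℕ) = y + (a - 1)) := by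
  rw [orderedJoin, SimpleGraph.fromRel_adj]
  constructor
  · rintro ⟨-, h | ⟨x, y, hxy, hj, hi⟩ | ⟨x, y, hxy, hj, hi⟩⟩
    · exact h
    · exact Or.inl ⟨y, x, hxy.symm, hi, hj⟩
    · exact Or.inr ⟨y, x, hxy.symm, hi, hj⟩
  · refine fun h => ⟨?_, Or.inl h⟩
    rintro rfl
    rcases h with ⟨x, y, hxy, hi, hj⟩ | ⟨x, y, hxy, hi, hj⟩ <;> exact hxy.ne (Fin.ext (by omega))

theorem orderedJoin_connected (hA : A.Connected) (hB : B.Connected) :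
    (orderedJoin A B).Connected := by
  have ha : 0 < a := hA.nonempty.elim fun v => v.pos
  have hb : 0 < b := hB.nonempty.elim fun v => v.pos
  let inl : A →g orderedJoin A B :=
    ⟨Fin.castLE (by omega), fun h => orderedJoin_adj.2 (Or.inl ⟨_, _, h, rfl, rfl⟩)⟩
  let inr : B →g orderedJoin A B :=
    ⟨fun y => ⟨y + (a - 1), by omega⟩, fun h => orderedJoin_adj.2 (Or.inr ⟨_, _, h, rfl, rfl⟩)⟩
  rw [SimpleGraph.connected_iff_exists_forall_reachable]
  refine ⟨inr ⟨0, hb⟩, fun u => ?_⟩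
  by_cases hu : (u : ℕ) < a
  · have hglue : inr ⟨0, hb⟩ = inl ⟨a - 1, by omega⟩ := Fin.ext (by simp [inr, inl])
    rw [hglue, show u = inl ⟨u, hu⟩ from rfl]
    exact (hA.preconnected _ _).map inl
  · rw [show u = inr ⟨u - (a - 1), by omega⟩ from Fin.ext (by simp [inr]; omega)]
    exact (hB.preconnected _ _).map inr

theorem orderedSubgraph_orderedJoin {R : SimpleGraph (Fin N)} {φ : Fin a → Fin N}
    {ψ : Fin b → Fin N} (hφ : StrictMono φ) (hψ : StrictMono ψ)
    (hφR : ∀ x y, A.Adj x y → R.Adj (φ x) (φ y)) (hψR : ∀ x y, B.Adj x y → R.Adj (ψ x) (ψ y))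
    (ha : 0 < a) (hb : 0 < b) (hglue : φ ⟨a - 1, by omega⟩ = ψ ⟨0, hb⟩) :
    OrderedSubgraph (orderedJoin A B) R := by
  let χ : Fin (a + b - 1) → Fin N := fun i =>
    if h : (i : ℕ) < a then φ ⟨i, h⟩ else ψ ⟨i - (a - 1), by omega⟩
  have hχφ : ∀ (i : Fin (a + b - 1)) (x : Fin a), (i : ℕ) = x → χ i = φ x := by
    intro i x hix
    simp only [χ, dif_pos (hix ▸ x.isLt : (i : ℕ) < a)]
    exact congrArg φ (Fin.ext hix)
  have hχψ : ∀ (i : Fin (a + b - 1)) (y : Fin b), (i : ℕ) = y + (a - 1) → χ i = ψ y := by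
    intro i y hiy
    by_cases hi : (i : ℕ) < a
    · rw [hχφ i ⟨a - 1, by omega⟩ (by simp; omega), hglue]
      exact congrArg ψ (Fin.ext (by simp; omega))
    · simp only [χ, dif_neg hi]
      exact congrArg ψ (Fin.ext (by simp; omega))
  refine ⟨χ, fun i j hij => ?_, fun i j hij => ?_⟩
  · have hij : (i : ℕ) < j := hij
    by_cases hja : (j : ℕ) < a
    · rw [hχφ i ⟨i, by omega⟩ rfl, hχφ j ⟨j, hja⟩ rfl]
      exact hφ (Fin.mk_lt_mk.2 hij)
    rw [hχψ j ⟨j - (a - 1), by omega⟩ (by simp; omega)]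
    by_cases hia : a - 1 ≤ (i : ℕ)
    · rw [hχψ i ⟨i - (a - 1), by omega⟩ (by simp; omega)]
      exact hψ (Fin.mk_lt_mk.2 (by omega))
    · rw [hχφ i ⟨i, by omega⟩ rfl]
      calc φ ⟨i, _⟩ < φ ⟨a - 1, by omega⟩ := hφ (Fin.mk_lt_mk.2 (by omega))
        _ = ψ ⟨0, hb⟩ := hglue
        _ ≤ ψ ⟨j - (a - 1), _⟩ := hψ.monotone (Fin.mk_le_mk.2 (Nat.zero_le _))
  · rcases orderedJoin_adj.1 hij with ⟨x, y, hxy, hi, hj⟩ | ⟨x, y, hxy, hi, hj⟩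
    · rw [hχφ i x hi, hχφ j y hj]
      exact hφR x y hxy
    · rw [hχψ i x hi, hχψ j y hj]
      exact hψR x y hxy

end OrderedJoin

section Star

variable {l r : ℕ}

theorem orderedStar_connected (hl : 1 ≤ l) (hr : 1 ≤ r) : (orderedStar l r).Connected := by
  rw [SimpleGraph.connected_iff_exists_forall_reachable]
  refine ⟨⟨l - 1, by omega⟩, fun w => ?_⟩
  rcases eq_or_ne (⟨l - 1, by omega⟩ : Fin (l + r - 1)) w with rfl | h
  · rfl
  · exact SimpleGraph.Adj.reachable ((SimpleGraph.fromRel_adj _ _ _).2 ⟨h, Or.inl rfl⟩)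

theorem orderedStar_adj_last (i j : Fin (l + 1 - 1)) (h : (orderedStar l 1).Adj i j) :
    (i : ℕ) + 1 = l + 1 - 1 ∨ (j : ℕ) + 1 = l + 1 - 1 := by
  have := i.isLt
  have := j.isLt
  rcases ((SimpleGraph.fromRel_adj _ _ _).1 h).2 with h | h <;> omega

theorem orderedStar_comap_rev_adj_last (i j : Fin (1 + r - 1))
    (h : ((orderedStar 1 r).comap Fin.rev).Adj i j) :
    (i : ℕ) + 1 = 1 + r - 1 ∨ (j : ℕ) + 1 = 1 + r - 1 := by
  have := i.isLt
  have := j.isLt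
  rw [SimpleGraph.comap_adj] at h
  rcases ((SimpleGraph.fromRel_adj _ _ _).1 h).2 with h | h <;> simp [Fin.val_rev] at h <;> omega

end Star

section Reversal

variable {a b N k : ℕ} {A : SimpleGraph (Fin a)} {B : SimpleGraph (Fin b)}

theorem orderedSubgraph_orderedJoin_comap_rev (ha : 0 < a) (hb : 0 < b) :
    OrderedSubgraph (orderedJoin A B)
      ((orderedJoin (B.comap Fin.rev) (A.comap Fin.rev)).comap Fin.rev) := by
  refine ⟨Fin.cast (by omega), Fin.cast_strictMono _, fun i j hij => ?_⟩
  rw [SimpleGraph.comap_adj, orderedJoin_adj]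
  rcases orderedJoin_adj.1 hij with ⟨x, y, hxy, hi, hj⟩ | ⟨x, y, hxy, hi, hj⟩
  · refine Or.inr ⟨x.rev, y.rev, by simpa using hxy, ?_, ?_⟩ <;> simp [Fin.val_rev] <;> omega
  · refine Or.inl ⟨x.rev, y.rev, by simpa using hxy, ?_, ?_⟩ <;> simp [Fin.val_rev] <;> omega

theorem OrderedArrows.of_orderedJoin_comap_rev (ha : 0 < a) (hb : 0 < b)
    (h : OrderedArrows N (orderedJoin (B.comap Fin.rev) (A.comap Fin.rev))
      (⊤ : SimpleGraph (Fin k))) :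
    OrderedArrows N (orderedJoin A B) (⊤ : SimpleGraph (Fin k)) :=
  fun R => (h.comap_rev R).imp_left (orderedSubgraph_orderedJoin_comap_rev ha hb).trans

end Reversal

section LinearOrder

variable {α : Type*} [LinearOrder α] {R : SimpleGraph α} {S : Finset α} {c : α}

def IsLeftStar (R : SimpleGraph α) (S : Finset α) (c : α) : Prop :=
  c ∈ S ∧ ∀ x ∈ S, x ≠ c → x < c ∧ R.Adj x c

theorem IsLeftStar.max'_eq (h : IsLeftStar R S c) : S.max' ⟨c, h.1⟩ = c :=
  le_antisymm
    (S.max'_le _ _ fun x hx => (eq_or_ne x c).elim le_of_eq fun hne => (h.2 x hx hne).1.le)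
    (S.le_max' c h.1)

theorem IsLeftStar.orderEmbOfFin_last {p : ℕ} (h : IsLeftStar R S c) (hS : #S = p) (hp : 0 < p) :
    S.orderEmbOfFin hS ⟨p - 1, by omega⟩ = c := by
  rw [Finset.orderEmbOfFin_last hS hp]
  exact h.max'_eq

theorem IsLeftStar.map_adj {p : ℕ} {X : SimpleGraph (Fin p)} (h : IsLeftStar R S c)
    (hS : #S = p) (hX : ∀ i j, X.Adj i j → (i : ℕ) + 1 = p ∨ (j : ℕ) + 1 = p) :
    ∀ i j, X.Adj i j → R.Adj (S.orderEmbOfFin hS i) (S.orderEmbOfFin hS j) := by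
  suffices hlast : ∀ i j, X.Adj i j → (j : ℕ) + 1 = p →
      R.Adj (S.orderEmbOfFin hS i) (S.orderEmbOfFin hS j) by
    intro i j hij
    exact (hX i j hij).elim (fun hi => (hlast j i hij.symm hi).symm) (hlast i j hij)
  intro i j hij hj
  have hc : S.orderEmbOfFin hS j = c := by
    rw [← h.orderEmbOfFin_last hS (by omega)]
    exact congrArg _ (Fin.ext (by simp; omega))
  rw [hc]
  refine (h.2 _ (S.orderEmbOfFin_mem hS i) ?_).2
  exact hc ▸ (S.orderEmbOfFin hS).injective.ne hij.ne

theorem exists_isLeftStar [DecidableRel R.Adj] {W : Finset α} {k : ℕ}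
    (hk : k ≤ #{w ∈ W | w < c ∧ R.Adj w c}) :
    ∃ S ⊆ insert c W, #S = k + 1 ∧ IsLeftStar R S c := by
  obtain ⟨F, hFsub, hF⟩ := exists_subset_card_eq hk
  have hFc : ∀ x ∈ F, x < c ∧ R.Adj x c := fun x hx => (mem_filter.1 (hFsub hx)).2
  refine ⟨insert c F, insert_subset_insert c (hFsub.trans (filter_subset _ _)), ?_,
    mem_insert_self c F, fun x hx hne => hFc x ((mem_insert.1 hx).resolve_left hne)⟩
  rw [card_insert_of_notMem fun hc => (hFc c hc).1.false, hF]

theorem exists_isNClique_compl_of_card_lt (R : SimpleGraph α) [DecidableRel R.Adj] {k : ℕ} :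
    ∀ (n : ℕ) (W : Finset α), (∀ v ∈ W, #{w ∈ W | w < v ∧ R.Adj w v} < k) →
      k * n < #W → ∃ T ⊆ W, Rᶜ.IsNClique (n + 1) T := by
  intro n
  induction n with
  | zero =>
    intro W _ hW
    obtain ⟨v, hv⟩ := card_pos.1 (by omega : 0 < #W)
    exact ⟨{v}, singleton_subset_iff.2 hv, SimpleGraph.isNClique_singleton.2 rfl⟩
  | succ n ih =>
    intro W hdeg hW
    have hne : W.Nonempty := card_pos.1 (by omega)
    obtain ⟨v, hvW, hvmax⟩ : ∃ v ∈ W, ∀ w ∈ W, w ≤ v := ⟨W.max' hne, W.max'_mem hne, W.le_max'⟩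
    set B := {w ∈ W | w < v ∧ ¬ R.Adj w v}
    have hsplit : W ⊆ insert v ({w ∈ W | w < v ∧ R.Adj w v} ∪ B) := by
      intro w hw
      rcases (hvmax w hw).lt_or_eq with hlt | heq
      · by_cases hadj : R.Adj w v <;> simp [B, hw, hlt, hadj]
      · exact heq ▸ mem_insert_self _ _
    have hB : k * n < #B := by
      have := (card_le_card hsplit).trans ((card_insert_le _ _).trans
        (Nat.succ_le_succ (card_union_le _ _)))
      have := hdeg v hvW
      rw [Nat.mul_succ] at hW
      omega
    have hBdeg : ∀ u ∈ B, #{w ∈ B | w < u ∧ R.Adj w u} < k := fun u hu =>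
      (card_le_card (filter_subset_filter _ (filter_subset _ _))).trans_lt
        (hdeg u (filter_subset _ _ hu))
    obtain ⟨T, hTB, hT⟩ := ih B hBdeg hB
    refine ⟨insert v T, insert_subset hvW (hTB.trans (filter_subset _ _)),
      hT.insert fun w hw => ?_⟩
    obtain ⟨hwv, hnadj⟩ := (mem_filter.1 (hTB hw)).2
    exact (SimpleGraph.compl_adj _ _ _).2 ⟨hwv.ne', fun h => hnadj h.symm⟩

end LinearOrder

section UpperBound

variable {m n k l N : ℕ} {G : SimpleGraph (Fin m)}

theorem OrderedArrows.exists_avoiding (hG : OrderedArrows ((m - 1) * (n - 1) + 1) G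
      (⊤ : SimpleGraph (Fin n))) (hn : 1 ≤ n) {R : SimpleGraph (Fin N)} [DecidableRel R.Adj]
    {W : Finset (Fin N)} (hW : ∀ v ∈ W, #{w ∈ W | w < v ∧ R.Adj w v} < k)
    (hN : (m - 1 + k) * (n - 1) + 1 ≤ N) :
    (∃ ψ : Fin m → Fin N, StrictMono ψ ∧ (∀ i, ψ i ∉ W) ∧
      ∀ i j, G.Adj i j → R.Adj (ψ i) (ψ j)) ∨ OrderedSubgraph (⊤ : SimpleGraph (Fin n)) Rᶜ := by
  by_cases hWbig : k * (n - 1) < #W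
  · obtain ⟨T, -, hT⟩ := exists_isNClique_compl_of_card_lt R (n - 1) W hW hWbig
    rw [Nat.sub_add_cancel hn] at hT
    exact Or.inr (orderedSubgraph_top_of_isNClique hT)
  · have hWc : (m - 1) * (n - 1) + 1 ≤ #Wᶜ := by
      rw [card_compl, Fintype.card_fin]
      rw [add_mul] at hN
      omega
    refine (hG.exists_within R Wᶜ hWc).imp_left ?_
    rintro ⟨ψ, hψ, hψW, hψR⟩
    exact ⟨ψ, hψ, fun i => mem_compl.1 (hψW i), hψR⟩

theorem OrderedArrows.leftStar_orderedJoin {X : SimpleGraph (Fin l)} (hl : 0 < l)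
    (hX : ∀ i j, X.Adj i j → (i : ℕ) + 1 = l ∨ (j : ℕ) + 1 = l) (hm : 0 < m) (hn : 1 ≤ n)
    (hG : OrderedArrows ((m - 1) * (n - 1) + 1) G (⊤ : SimpleGraph (Fin n))) :
    OrderedArrows ((m - 1 + (l - 1)) * (n - 1) + 1) (orderedJoin X G)
      (⊤ : SimpleGraph (Fin n)) := by
  classical
  intro R
  let W : Finset (Fin _) := {v | ¬ ∃ S, #S = l ∧ IsLeftStar R S v}
  have hW : ∀ v ∈ W, #{w ∈ W | w < v ∧ R.Adj w v} < l - 1 := by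
    intro v hv
    by_contra! hdeg
    obtain ⟨S, -, hS, hstar⟩ := exists_isLeftStar hdeg
    exact (mem_filter.1 hv).2 ⟨S, by omega, hstar⟩
  refine (hG.exists_avoiding hn hW le_rfl).imp_left ?_
  rintro ⟨ψ, hψ, hψW, hψR⟩
  obtain ⟨S, hS, hstar⟩ : ∃ S, #S = l ∧ IsLeftStar R S (ψ ⟨0, hm⟩) := by
    simpa [W] using hψW ⟨0, hm⟩
  exact orderedSubgraph_orderedJoin (S.orderEmbOfFin hS).strictMono hψ (hstar.map_adj hS hX)
    hψR hl hm (hstar.orderEmbOfFin_last hS hl)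

theorem OrderedArrows.orderedJoin_leftStar {X : SimpleGraph (Fin l)} (hl : 0 < l)
    (hX : ∀ i j, X.Adj i j → (i : ℕ) + 1 = l ∨ (j : ℕ) + 1 = l) (hm : 0 < m) (hn : 1 ≤ n)
    (hG : OrderedArrows ((m - 1) * (n - 1) + 1) G (⊤ : SimpleGraph (Fin n))) :
    OrderedArrows ((m - 1 + (l - 1)) * (n - 1) + 1) (orderedJoin G X)
      (⊤ : SimpleGraph (Fin n)) := by
  classical
  intro R
  let W : Finset (Fin _) := {v | ¬ ∃ S c, #S = l ∧ IsLeftStar R S c ∧ v ∈ S ∧ ∀ x ∈ S, v ≤ x}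
  have hW : ∀ v ∈ W, #{w ∈ W | w < v ∧ R.Adj w v} < l - 1 := by
    intro v hv
    by_contra! hdeg
    obtain ⟨S, hSW, hS, hstar⟩ := exists_isLeftStar hdeg
    have hne : S.Nonempty := ⟨v, hstar.1⟩
    have hmin : S.min' hne ∈ W := insert_eq_of_mem hv ▸ hSW (S.min'_mem hne)
    exact (mem_filter.1 hmin).2 ⟨S, v, by omega, hstar, S.min'_mem hne, S.min'_le⟩
  refine (hG.exists_avoiding hn hW le_rfl).imp_left ?_
  rintro ⟨ψ, hψ, hψW, hψR⟩
  obtain ⟨S, c, hS, hstar, hleast⟩ : ∃ S c, #S = l ∧ IsLeftStar R S c ∧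
      ψ ⟨m - 1, by omega⟩ ∈ S ∧ ∀ x ∈ S, ψ ⟨m - 1, by omega⟩ ≤ x := by
    simpa [W] using hψW ⟨m - 1, by omega⟩
  refine orderedSubgraph_orderedJoin hψ (S.orderEmbOfFin hS).strictMono hψR
    (hstar.map_adj hS hX) hm hl ?_
  rw [orderEmbOfFin_zero hS hl]
  exact ((S.min'_eq_iff _ _).2 hleast).symm

end UpperBound

theorem stmt_9_general (n r l : ℕ) (hn : 1 ≤ n) (hr : 1 ≤ r) (hl : 1 ≤ l)
    (m : ℕ) (G : SimpleGraph (Fin m)) (hgood : IsNGood n G) :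
    IsNGood n (orderedJoin G (orderedStar 1 r)) ∧
    IsNGood n (orderedJoin G (orderedStar l 1)) ∧
    IsNGood n (orderedJoin (orderedStar l 1) G) ∧
    IsNGood n (orderedJoin (orderedStar 1 r) G) := by
  have hG := hgood.1
  have hm : 0 < m := hG.nonempty.elim fun v => v.pos
  have hA := (isNGood_iff_orderedArrows hG hn).1 hgood
  have hS1r := orderedStar_connected le_rfl hr
  have hSl1 := orderedStar_connected hl le_rfl
  have hX1r := orderedStar_comap_rev_adj_last (r := r)
  have hXl1 := orderedStar_adj_last (l := l)
  refine ⟨?_, ?_, ?_, ?_⟩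
  · rw [isNGood_iff_orderedArrows (orderedJoin_connected hG hS1r) hn]
    convert (hA.comap_rev.leftStar_orderedJoin (by omega) hX1r hm hn).of_orderedJoin_comap_rev
      hm (by omega) using 3
    omega
  · rw [isNGood_iff_orderedArrows (orderedJoin_connected hG hSl1) hn]
    convert hA.orderedJoin_leftStar (by omega) hXl1 hm hn using 3
    omega
  · rw [isNGood_iff_orderedArrows (orderedJoin_connected hSl1 hG) hn]
    convert hA.leftStar_orderedJoin (by omega) hXl1 hm hn using 3
    omega
  · rw [isNGood_iff_orderedArrows (orderedJoin_connected hS1r hG) hn]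
    convert (hA.comap_rev.orderedJoin_leftStar (by omega) hX1r hm hn).of_orderedJoin_comap_rev
      (by omega) hm using 3
    omega

/-- For all positive integers `n`, `r`, `l`: if a connected ordered graph `G`
is `n`-good, then `G + S_{1,r}`, `G + S_{l,1}`, `S_{l,1} + G` and `S_{1,r} + G` are
`n`-good. -/
theorem stmt_9 (n r l : ℕ) (hn : 1 ≤ n) (hr : 1 ≤ r) (hl : 1 ≤ l)
    (m : ℕ) (G : SimpleGraph (Fin m)) (hG : G.Connected) (hgood : IsNGood n G) :
    IsNGood n (orderedJoin G (orderedStar 1 r)) ∧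
    IsNGood n (orderedJoin G (orderedStar l 1)) ∧
    IsNGood n (orderedJoin (orderedStar l 1) G) ∧
    IsNGood n (orderedJoin (orderedStar 1 r) G) :=
  stmt_9_general n r l hn hr hl m G hgood
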